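/- arXiv:1707.07401 — 3 statements merged into one kernel-verified Lean document; each statement's English description precedes it below -/
import Mathlib

section
/- Let N₁, ..., N_L be independent and identically distributed Poisson random variables each with mean λ > 0, and let n ≥ 1 be an integer. Then P((∃ i ∈ {1,...,L}, N_i = 1) and N₁ + ⋯ + N_L = n) = Σ_{c=1}^{min(L,n)} (−1)^{c+1} · C(L,c) · (λ·e^{−λ})^c · ((L − c)·λ)^{n−c} · e^{−(L−c)·λ} / (n − c)!, where C(L,c) is the binomial coefficient and with the convention 0⁰ = 1 when c = L = n. -/
/-!
By independence the probability is the sum, over occupancy vectors `f` with `∑ i, f i = n` and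
some `f i = 1`, of the products of Poisson weights `e^{-λ} λ^{f i} / (f i)!`. Inclusion–exclusion
over the set `T` of pilots forced to be singletons reduces this to sums over `f` with `f = 1` on
`T`. Removing those coordinates leaves `L - #T` Poisson(λ) weights with total `n - #T`, and by the
multinomial theorem their sum is the Poisson((L - #T)λ) weight of `n - #T`. The result depends on
`T` only through `c = #T`, which produces the factor `C(L, c)`.
-/

open MeasureTheory ProbabilityTheory Finset

namespace Finset

theorem sum_piAntidiag_prod_pow_div_factorial {ι K : Type*} [DecidableEq ι] [Field K] [CharZero K]
    (s : Finset ι) (x : ι → K) (k : ℕ) :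
    ∑ f ∈ piAntidiag s k, ∏ i ∈ s, x i ^ f i / (f i).factorial
      = (∑ i ∈ s, x i) ^ k / k.factorial := by
  rw [sum_pow_eq_sum_piAntidiag, sum_div]
  refine sum_congr rfl fun f hf => ?_
  have hspec : ((∏ i ∈ s, (f i).factorial : ℕ) : K) * Nat.multinomial s f = k.factorial := by
    rw [← Nat.cast_mul, Nat.multinomial_spec, (mem_piAntidiag.1 hf).1]
  have hfac : ∀ i ∈ s, ((f i).factorial : K) ≠ 0 :=
    fun i _ => Nat.cast_ne_zero.2 (f i).factorial_ne_zero
  have hm : (Nat.multinomial s f : K) ≠ 0 := by exact_mod_cast (Nat.multinomial_pos s f).ne'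
  rw [prod_div_distrib, ← hspec]
  push_cast
  field_simp [prod_ne_zero_iff.2 hfac]

theorem inclusion_exclusion_sum_filter_exists {ι α G : Type*} [DecidableEq α] [AddCommGroup G]
    (s : Finset ι) (P : Finset α) (p : ι → α → Prop) [∀ i, DecidablePred (p i)] (F : α → G) :
    ∑ a ∈ P with ∃ i ∈ s, p i a, F a
      = ∑ t ∈ s.powerset with t.Nonempty,
          (-1 : ℤ) ^ (#t + 1) • ∑ a ∈ P with ∀ i ∈ t, p i a, F a := by
  have hunion : {a ∈ P | ∃ i ∈ s, p i a} = s.biUnion fun i => {a ∈ P | p i a} := by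
    ext a
    simp only [mem_filter, mem_biUnion]
    tauto
  rw [hunion, inclusion_exclusion_sum_biUnion, ← sum_coe_sort {t ∈ s.powerset | t.Nonempty}]
  refine sum_congr rfl fun t _ => ?_
  congr 2
  ext a
  simp only [mem_inf', mem_filter]
  exact ⟨fun h => ⟨(h _ (mem_filter.1 t.2).2.choose_spec).1, fun i hi => (h i hi).2⟩,
    fun h i hi => ⟨h.1, h.2 i hi⟩⟩

theorem sum_filter_piAntidiag_forall_mem_eq_one {ι M : Type*} [Fintype ι] [DecidableEq ι]
    [CommSemiring M] (w : ℕ → M) (T : Finset ι) {n : ℕ} (hT : #T ≤ n) :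
    ∑ f ∈ piAntidiag univ n with ∀ i ∈ T, f i = 1, ∏ i, w (f i)
      = w 1 ^ #T * ∑ g ∈ piAntidiag Tᶜ (n - #T), ∏ i ∈ Tᶜ, w (g i) := by
  have hsumT : ∀ f : ι → ℕ, (∀ i ∈ T, f i = 1) → ∑ i ∈ T, f i = #T :=
    fun f hf => (sum_const_nat hf).trans (mul_one _)
  rw [mul_sum]
  refine sum_nbij' (fun f i => if i ∈ T then 0 else f i) (fun g i => if i ∈ T then 1 else g i)
    ?_ ?_ ?_ ?_ ?_
  · intro f hf
    rw [mem_filter, mem_piAntidiag] at hf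
    rw [mem_piAntidiag]
    refine ⟨?_, fun i hi => mem_compl.2 fun hiT => hi (if_pos hiT)⟩
    rw [sum_congr rfl fun i hi => if_neg (mem_compl.1 hi), eq_tsub_iff_add_eq_of_le hT,
      add_comm, ← hsumT f hf.2, sum_add_sum_compl]
    exact hf.1.1
  · intro g hg
    rw [mem_piAntidiag] at hg
    rw [mem_filter, mem_piAntidiag]
    refine ⟨⟨?_, fun i _ => mem_univ i⟩, fun i hi => if_pos hi⟩
    rw [← sum_add_sum_compl T, hsumT _ fun i hi => if_pos hi,
      sum_congr rfl fun i hi => if_neg (mem_compl.1 hi), hg.1]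
    omega
  · intro f hf
    rw [mem_filter] at hf
    ext i
    by_cases hi : i ∈ T <;> simp [hi, hf.2]
  · intro g hg
    rw [mem_piAntidiag] at hg
    ext i
    by_cases hi : i ∈ T
    · have : g i = 0 := by_contra fun h => mem_compl.1 (hg.2 i h) hi
      simp [hi, this]
    · simp [hi]
  · intro f hf
    rw [mem_filter] at hf
    rw [← prod_mul_prod_compl T, prod_congr rfl fun i hi => by rw [hf.2 i hi], prod_const]
    congr 1
    exact prod_congr rfl fun i hi => by simp only [if_neg (mem_compl.1 hi)]

theorem filter_piAntidiag_forall_mem_eq_one_eq_empty {ι : Type*} [Fintype ι]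
    [DecidableEq ι] {T : Finset ι} {n : ℕ} (hn : n < #T) :
    {f ∈ piAntidiag (univ : Finset ι) n | ∀ i ∈ T, f i = 1} = ∅ := by
  refine filter_eq_empty_iff.2 fun f hf hT => hn.not_ge ?_
  rw [← mul_one #T, ← sum_const_nat hT, ← (mem_piAntidiag.1 hf).1]
  exact sum_le_sum_of_subset (subset_univ T)

end Finset

theorem Real.sum_piAntidiag_prod_exp_neg_mul_pow_div_factorial {ι : Type*} [DecidableEq ι]
    (s : Finset ι) (x : ℝ) (k : ℕ) :
    ∑ f ∈ piAntidiag s k, ∏ i ∈ s, Real.exp (-x) * x ^ f i / (f i).factorial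
      = Real.exp (-(#s * x)) * (#s * x) ^ k / k.factorial := by
  simp_rw [mul_div_assoc, prod_mul_distrib, prod_const, ← mul_sum,
    sum_piAntidiag_prod_pow_div_factorial, sum_const, nsmul_eq_mul, ← Real.exp_nat_mul]
  ring_nf

theorem sum_filter_piAntidiag_forall_mem_eq_one_prod_poisson {ι : Type*} [Fintype ι]
    [DecidableEq ι] (x : ℝ) {T : Finset ι} {n : ℕ} (hT : #T ≤ n) :
    ∑ f ∈ piAntidiag univ n with ∀ i ∈ T, f i = 1, ∏ i, Real.exp (-x) * x ^ f i / (f i).factorial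
      = (x * Real.exp (-x)) ^ #T * (((Fintype.card ι : ℝ) - #T) * x) ^ (n - #T) *
          Real.exp (-(((Fintype.card ι : ℝ) - #T) * x)) / (n - #T).factorial := by
  rw [sum_filter_piAntidiag_forall_mem_eq_one (fun k => Real.exp (-x) * x ^ k / k.factorial) T hT,
    Real.sum_piAntidiag_prod_exp_neg_mul_pow_div_factorial, card_compl,
    Nat.cast_sub (card_le_univ T)]
  simp only [pow_one, Nat.factorial_one, Nat.cast_one, div_one]
  ring

theorem sum_filter_exists_eq_one_piAntidiag_prod_poisson {ι : Type*} [Fintype ι] [DecidableEq ι]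
    (x : ℝ) (n : ℕ) :
    ∑ f ∈ piAntidiag (univ : Finset ι) n with ∃ i, f i = 1,
        ∏ i, Real.exp (-x) * x ^ f i / (f i).factorial
      = ∑ c ∈ Icc 1 (min (Fintype.card ι) n),
          (-1 : ℝ) ^ (c + 1) * (Fintype.card ι).choose c * (x * Real.exp (-x)) ^ c *
            (((Fintype.card ι : ℝ) - c) * x) ^ (n - c) *
              Real.exp (-(((Fintype.card ι : ℝ) - c) * x)) / (n - c).factorial := by
  set L := Fintype.card ι
  set p : ℕ → ℝ := fun k => Real.exp (-x) * x ^ k / k.factorial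
  set term : ℕ → ℝ := fun c => if c ∈ Icc 1 (min L n) then
    (-1 : ℝ) ^ (c + 1) * (x * Real.exp (-x)) ^ c * ((L - c) * x) ^ (n - c) *
      Real.exp (-((L - c) * x)) / (n - c).factorial else 0
  have hterm : ∀ T : Finset ι, T.Nonempty →
      (-1 : ℤ) ^ (#T + 1) • ∑ f ∈ piAntidiag univ n with ∀ i ∈ T, f i = 1, ∏ i, p (f i)
        = term #T := by
    intro T hT
    by_cases hTn : #T ≤ n
    · have hc : #T ∈ Icc 1 (min L n) :=
        mem_Icc.2 ⟨card_pos.2 hT, le_min (card_le_univ T) hTn⟩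
      rw [sum_filter_piAntidiag_forall_mem_eq_one_prod_poisson x hTn]
      simp only [term, if_pos hc, zsmul_eq_mul]
      push_cast
      ring
    · have hc : #T ∉ Icc 1 (min L n) := fun hc => hTn ((mem_Icc.1 hc).2.trans (min_le_right _ _))
      rw [filter_piAntidiag_forall_mem_eq_one_eq_empty (not_le.1 hTn), sum_empty, smul_zero]
      exact (if_neg hc).symm
  calc ∑ f ∈ piAntidiag (univ : Finset ι) n with ∃ i, f i = 1, ∏ i, p (f i)
      = ∑ T ∈ univ.powerset with T.Nonempty,
          (-1 : ℤ) ^ (#T + 1) • ∑ f ∈ piAntidiag univ n with ∀ i ∈ T, f i = 1, ∏ i, p (f i) := by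
        convert inclusion_exclusion_sum_filter_exists univ (piAntidiag (univ : Finset ι) n)
          (fun i f => f i = 1) fun f => ∏ i, p (f i) using 5
        simp
    _ = ∑ T ∈ univ.powerset, term #T := by
        rw [sum_congr rfl fun T hT => hterm T (mem_filter.1 hT).2]
        exact sum_filter_of_ne fun T _ h => nonempty_iff_ne_empty.2 fun hT => h (by simp [term, hT])
    _ = ∑ c ∈ range (L + 1), L.choose c • term c := by rw [sum_powerset_apply_card, card_univ]
    _ = _ := by
        simp only [term, smul_ite, smul_zero]
        rw [sum_ite_mem, inter_eq_right.2 fun c hc => mem_range.2 <| by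
          have := (mem_Icc.1 hc).2.trans (min_le_left _ _); omega]
        refine sum_congr rfl fun c _ => ?_
        rw [nsmul_eq_mul]
        ring

theorem ProbabilityTheory.iIndepFun.measure_mem_finset {Ω ι β : Type*} [MeasurableSpace Ω]
    {μ : Measure Ω} [Fintype ι] [MeasurableSpace β] [MeasurableSingletonClass β]
    {X : ι → Ω → β} (hX : ∀ i, Measurable (X i)) (h : iIndepFun X μ) (A : Finset (ι → β)) :
    μ {ω | (fun i => X i ω) ∈ A} = ∑ f ∈ A, ∏ i, μ {ω | X i ω = f i} := by
  have hA : {ω | (fun i => X i ω) ∈ A} = ⋃ f ∈ A, ⋂ i, X i ⁻¹' {f i} := by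
    ext ω
    simp only [Set.mem_ofPred_eq, Set.mem_iUnion, Set.mem_iInter, Set.mem_preimage,
      Set.mem_singleton_iff, exists_prop]
    exact ⟨fun hω => ⟨_, hω, fun _ => rfl⟩, fun ⟨f, hf, hω⟩ => funext hω ▸ hf⟩
  have hdisj : Set.PairwiseDisjoint (A : Set (ι → β)) fun f => ⋂ i, X i ⁻¹' {f i} := by
    intro f _ g _ hfg
    obtain ⟨i, hi⟩ := Function.ne_iff.1 hfg
    exact Set.disjoint_left.2 fun ω hf hg => hi <| by
      simp only [Set.mem_iInter, Set.mem_preimage, Set.mem_singleton_iff] at hf hg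
      rw [← hf i, hg i]
  rw [hA, measure_biUnion_finset hdisj fun f _ =>
    MeasurableSet.iInter fun i => hX i (measurableSet_singleton _)]
  exact sum_congr rfl fun f _ => h.meas_iInter fun i => ⟨{f i}, measurableSet_singleton _, rfl⟩

theorem stmt7_general {Ω : Type*} [MeasurableSpace Ω] (μ : Measure Ω)
    (L : ℕ) (lam : ℝ) (hlam : 0 < lam)
    (N : Fin L → Ω → ℕ) (hmeas : ∀ i, Measurable (N i))
    (hindep : iIndepFun N μ)
    (hpois : ∀ (i : Fin L) (k : ℕ),
      μ {ω | N i ω = k} = ENNReal.ofReal (Real.exp (-lam) * lam ^ k / (Nat.factorial k)))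
    (n : ℕ) :
    μ {ω | (∃ i : Fin L, N i ω = 1) ∧ (∑ i, N i ω) = n}
      = ENNReal.ofReal (∑ c ∈ Finset.Icc 1 (min L n),
          (-1 : ℝ) ^ (c + 1) * (Nat.choose L c) * (lam * Real.exp (-lam)) ^ c *
            (((L : ℝ) - c) * lam) ^ (n - c) * Real.exp (-(((L : ℝ) - c) * lam)) /
              (Nat.factorial (n - c))) := by
  have hp : ∀ k : ℕ, 0 ≤ Real.exp (-lam) * lam ^ k / k.factorial := fun k => by positivity
  have hcount := sum_filter_exists_eq_one_piAntidiag_prod_poisson (ι := Fin L) lam n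
  rw [Fintype.card_fin] at hcount
  have hevent : {ω | (∃ i : Fin L, N i ω = 1) ∧ (∑ i, N i ω) = n}
      = {ω | (fun i => N i ω) ∈ {f ∈ piAntidiag (univ : Finset (Fin L)) n | ∃ i, f i = 1}} := by
    ext ω
    simp [and_comm]
  rw [hevent, hindep.measure_mem_finset hmeas, ← hcount,
    ENNReal.ofReal_sum_of_nonneg fun f _ => prod_nonneg fun i _ => hp _]
  -- the two filters differ only in their `Decidable` instances
  refine sum_congr (by congr!) fun f _ => ?_
  rw [ENNReal.ofReal_prod_of_nonneg fun i _ => hp _]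
  exact prod_congr rfl fun i _ => hpois i (f i)

/-- For iid Poisson(λ) variables `N₁, …, N_L` and an integer `n ≥ 1`:
`P((∃ i, Nᵢ = 1) ∧ ∑ Nᵢ = n)
  = Σ_{c=1}^{min(L,n)} (−1)^{c+1} C(L,c) (λ e^{−λ})^c ((L−c) λ)^{n−c} e^{−(L−c) λ}/(n−c)!`
(with `0⁰ = 1` when `c = L = n`). -/
theorem stmt7 {Ω : Type*} [MeasurableSpace Ω] (μ : Measure Ω) [IsProbabilityMeasure μ]
    (L : ℕ) (lam : ℝ) (hlam : 0 < lam)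
    (N : Fin L → Ω → ℕ) (hmeas : ∀ i, Measurable (N i))
    (hindep : iIndepFun N μ)
    (hpois : ∀ (i : Fin L) (k : ℕ),
      μ {ω | N i ω = k} = ENNReal.ofReal (Real.exp (-lam) * lam ^ k / (Nat.factorial k)))
    (n : ℕ) (hn : 1 ≤ n) :
    μ {ω | (∃ i : Fin L, N i ω = 1) ∧ (∑ i, N i ω) = n}
      = ENNReal.ofReal (∑ c ∈ Finset.Icc 1 (min L n),
          (-1 : ℝ) ^ (c + 1) * (Nat.choose L c) * (lam * Real.exp (-lam)) ^ c *
            (((L : ℝ) - c) * lam) ^ (n - c) * Real.exp (-(((L : ℝ) - c) * lam)) /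
              (Nat.factorial (n - c))) :=
  stmt7_general μ L lam hlam N hmeas hindep hpois n
end

section
/- Let N₁, ..., N_L be independent and identically distributed Poisson random variables each with mean λ > 0, and let n ≥ 0 be an integer with n ≠ 1 or L ≥ 2. Then the conditional probability that N₁ + ⋯ + N_L = n given that N_i ≠ 1 for all i ∈ {1,...,L} equals [ (L·λ)^n · e^{−L·λ}/n! + Σ_{c=1}^{min(L,n)} (−1)^c · C(L,c) · (λ·e^{−λ})^c · ((L − c)·λ)^{n−c} · e^{−(L−c)·λ} / (n − c)! ] / (1 − λ·e^{−λ})^L, where C(L,c) is the binomial coefficient and with the convention 0⁰ = 1 when c = L = n. -/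
/-!
The generating series of `Nᵢ` restricted to `Nᵢ ≠ 1` is `P - λe^{-λ} X`, where
`P = e^{-λ} e^{λX}` is the Poisson generating series. By independence, the probability that all
`Nᵢ ≠ 1` and `∑ Nᵢ = n` is the `n`-th coefficient of `(P - λe^{-λ} X)^L`; expanding binomially
and using `P^j = e^{-jλ} e^{jλX}` yields the numerator. The conditioning event has probability
`(1 - λe^{-λ})^L`.
-/

open MeasureTheory ProbabilityTheory PowerSeries

section IndependentSum

variable {Ω ι : Type*} [Fintype ι] {N : ι → Ω → ℕ}

lemma measureReal_forall_mem [MeasurableSpace Ω] {μ : Measure Ω} (hindep : iIndepFun N μ)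
    (s : ι → Set ℕ) : μ.real {ω | ∀ i, N i ω ∈ s i} = ∏ i, μ.real (N i ⁻¹' s i) := by
  rw [measureReal_def, show {ω | ∀ i, N i ω ∈ s i} = ⋂ i, N i ⁻¹' s i by ext; simp,
    hindep.meas_iInter fun i => ⟨s i, .of_discrete, rfl⟩, ENNReal.toReal_prod]
  rfl

variable [DecidableEq ι]

lemma setOf_forall_mem_and_sum_eq (s : ι → Set ℕ) (n : ℕ) :
    {ω | (∀ i, N i ω ∈ s i) ∧ ∑ i, N i ω = n}
      = ⋃ l ∈ Finset.finsuppAntidiag Finset.univ n, ⋂ i, N i ⁻¹' ({l i} ∩ s i) := by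
  ext ω
  simp only [Set.mem_ofPred_eq, Set.mem_iUnion, Set.mem_iInter, Set.mem_preimage,
    Set.mem_inter_iff, Set.mem_singleton_iff, Finset.mem_finsuppAntidiag, exists_prop]
  constructor
  · rintro ⟨hs, hsum⟩
    exact ⟨Finsupp.equivFunOnFinite.symm fun i => N i ω, ⟨by simpa using hsum, by simp⟩,
      fun i => ⟨rfl, hs i⟩⟩
  · rintro ⟨l, ⟨hsum, -⟩, hl⟩
    refine ⟨fun i => (hl i).2, ?_⟩
    simp only [(hl _).1]
    exact hsum

lemma measureReal_forall_mem_and_sum_eq [MeasurableSpace Ω] {μ : Measure Ω} [IsFiniteMeasure μ]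
    (hmeas : ∀ i, Measurable (N i)) (hindep : iIndepFun N μ) (s : ι → Set ℕ) (n : ℕ) :
    μ.real {ω | (∀ i, N i ω ∈ s i) ∧ ∑ i, N i ω = n}
      = coeff n (∏ i, mk fun m => μ.real (N i ⁻¹' ({m} ∩ s i))) := by
  have hdisj : ((Finset.univ.finsuppAntidiag n : Finset (ι →₀ ℕ)) : Set (ι →₀ ℕ)).PairwiseDisjoint
      fun l => ⋂ i, N i ⁻¹' ({l i} ∩ s i) := by
    intro l _ l' _ hne
    refine Set.disjoint_left.mpr fun ω hω hω' => hne (Finsupp.ext fun i => ?_)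
    simp only [Set.mem_iInter, Set.mem_preimage] at hω hω'
    exact (hω i).1.symm.trans (hω' i).1
  rw [setOf_forall_mem_and_sum_eq, coeff_prod,
    measureReal_biUnion_finset hdisj fun l _ => .iInter fun i => hmeas i .of_discrete]
  refine Finset.sum_congr rfl fun l _ => ?_
  simp only [coeff_mk, measureReal_def, hindep.meas_iInter fun i => ⟨_, .of_discrete, rfl⟩,
    ENNReal.toReal_prod]

end IndependentSum

lemma mk_measureReal_preimage_singleton_inter_compl {Ω : Type*} [MeasurableSpace Ω]
    (μ : Measure Ω) (f : Ω → ℕ) (k : ℕ) :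
    mk (fun m => μ.real (f ⁻¹' ({m} ∩ {k}ᶜ)))
      = mk (fun m => μ.real (f ⁻¹' {m})) - C (μ.real (f ⁻¹' {k})) * X ^ k := by
  ext m
  by_cases hm : m = k
  · subst hm
    simp
  · have hsingle : ({m} ∩ {k}ᶜ : Set ℕ) = {m} := by simpa [eq_comm] using hm
    rw [coeff_mk, hsingle]
    simp [coeff_X_pow, hm]

lemma coeff_pow_sub_C_mul_X {R : Type*} [CommRing R] (P : R⟦X⟧) (a : R) (L n : ℕ) :
    coeff n ((P - C a * X) ^ L)
      = ∑ c ∈ Finset.range (L + 1),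
          (-a) ^ c * L.choose c * if c ≤ n then coeff (n - c) (P ^ (L - c)) else 0 := by
  rw [sub_eq_neg_add, add_pow, map_sum]
  refine Finset.sum_congr rfl fun c _ => ?_
  rw [← coeff_X_pow_mul', ← coeff_C_mul, ← map_natCast C]
  congr 1
  rw [map_mul, map_pow, map_neg]
  ring

noncomputable def poissonSeries (lam : ℝ) : ℝ⟦X⟧ := C (Real.exp (-lam)) * rescale lam (exp ℝ)

lemma coeff_poissonSeries (lam : ℝ) (m : ℕ) :
    coeff m (poissonSeries lam) = Real.exp (-lam) * lam ^ m / m.factorial := by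
  simp [poissonSeries, coeff_exp]
  ring

lemma poissonSeries_pow (lam : ℝ) (j : ℕ) : poissonSeries lam ^ j = poissonSeries (j * lam) := by
  rw [poissonSeries, poissonSeries, mul_pow, ← map_pow, ← map_pow, exp_pow_eq_rescale_exp,
    rescale_rescale, ← Real.exp_nat_mul, mul_comm (j : ℝ)]
  ring_nf

lemma coeff_pow_poissonSeries_sub_C_mul_X (lam : ℝ) (L n : ℕ) :
    coeff n ((poissonSeries lam - C (lam * Real.exp (-lam)) * X) ^ L)
      = ((L : ℝ) * lam) ^ n * Real.exp (-((L : ℝ) * lam)) / (Nat.factorial n)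
          + ∑ c ∈ Finset.Icc 1 (min L n),
              (-1 : ℝ) ^ c * (Nat.choose L c) * (lam * Real.exp (-lam)) ^ c *
                (((L : ℝ) - c) * lam) ^ (n - c) *
                  Real.exp (-(((L : ℝ) - c) * lam)) / (Nat.factorial (n - c)) := by
  rw [coeff_pow_sub_C_mul_X, Finset.range_eq_Ico,
    Finset.sum_eq_sum_Ico_succ_bot (Nat.succ_pos L)]
  congr 1
  · simp [poissonSeries_pow, coeff_poissonSeries]
    ring
  · have hsub : Finset.Icc 1 (min L n) ⊆ Finset.Ico (0 + 1) (L + 1) := fun c hc => by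
      simp only [Finset.mem_Icc, Finset.mem_Ico] at hc ⊢
      omega
    rw [← Finset.sum_subset hsub fun c hc hcn => ?_]
    · refine Finset.sum_congr rfl fun c hc => ?_
      simp only [Finset.mem_Icc] at hc
      rw [if_pos (by omega), poissonSeries_pow, coeff_poissonSeries,
        Nat.cast_sub (by omega : c ≤ L), neg_pow]
      ring
    · simp only [Finset.mem_Icc, Finset.mem_Ico] at hc hcn
      rw [if_neg (by omega), mul_zero]

lemma mul_exp_neg_lt_one (x : ℝ) : x * Real.exp (-x) < 1 := by
  calc x * Real.exp (-x) < Real.exp x * Real.exp (-x) := by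
        gcongr
        linarith [Real.add_one_le_exp x]
    _ = 1 := by rw [← Real.exp_add, add_neg_cancel, Real.exp_zero]

theorem stmt8_general {Ω : Type*} [MeasurableSpace Ω] (μ : Measure Ω) [IsProbabilityMeasure μ]
    (L : ℕ) (lam : ℝ) (hlam : 0 < lam)
    (N : Fin L → Ω → ℕ) (hmeas : ∀ i, Measurable (N i))
    (hindep : iIndepFun N μ)
    (hpois : ∀ (i : Fin L) (k : ℕ),
      μ {ω | N i ω = k} = ENNReal.ofReal (Real.exp (-lam) * lam ^ k / (Nat.factorial k)))
    (n : ℕ) :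
    (μ[|{ω | ∀ i : Fin L, N i ω ≠ 1}]) {ω | (∑ i, N i ω) = n}
      = ENNReal.ofReal
          ((((L : ℝ) * lam) ^ n * Real.exp (-((L : ℝ) * lam)) / (Nat.factorial n)
            + ∑ c ∈ Finset.Icc 1 (min L n),
                (-1 : ℝ) ^ c * (Nat.choose L c) * (lam * Real.exp (-lam)) ^ c *
                  (((L : ℝ) - c) * lam) ^ (n - c) *
                    Real.exp (-(((L : ℝ) - c) * lam)) / (Nat.factorial (n - c)))
            / (1 - lam * Real.exp (-lam)) ^ L) := by
  have hlaw : ∀ i, mk (fun m => μ.real (N i ⁻¹' {m})) = poissonSeries lam := fun i => by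
    ext k
    rw [coeff_mk, coeff_poissonSeries, measureReal_def,
      show N i ⁻¹' {k} = {ω | N i ω = k} from rfl, hpois, ENNReal.toReal_ofReal (by positivity)]
  have hone : ∀ i, μ.real (N i ⁻¹' {1}) = lam * Real.exp (-lam) := fun i => by
    rw [← coeff_mk 1 fun m => μ.real (N i ⁻¹' {m}), hlaw, coeff_poissonSeries]
    simp [mul_comm]
  have hA : MeasurableSet {ω | ∀ i : Fin L, N i ω ≠ 1} := by measurability
  have hden : μ {ω | ∀ i : Fin L, N i ω ≠ 1}
      = ENNReal.ofReal ((1 - lam * Real.exp (-lam)) ^ L) := by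
    rw [← ofReal_measureReal]
    change ENNReal.ofReal (μ.real {ω | ∀ i, N i ω ∈ ({1}ᶜ : Set ℕ)}) = _
    simp only [measureReal_forall_mem hindep, Set.preimage_compl,
      probReal_compl_eq_one_sub (hmeas _ (measurableSet_singleton 1)), hone,
      Finset.prod_const, Finset.card_univ, Fintype.card_fin]
  have hnum : μ ({ω | ∀ i : Fin L, N i ω ≠ 1} ∩ {ω | (∑ i, N i ω) = n})
      = ENNReal.ofReal (coeff n ((poissonSeries lam - C (lam * Real.exp (-lam)) * X) ^ L)) := by
    rw [← ofReal_measureReal]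
    change ENNReal.ofReal (μ.real {ω | (∀ i, N i ω ∈ ({1}ᶜ : Set ℕ)) ∧ ∑ i, N i ω = n}) = _
    simp only [measureReal_forall_mem_and_sum_eq hmeas hindep,
      mk_measureReal_preimage_singleton_inter_compl, hlaw, hone, pow_one,
      Finset.prod_const, Finset.card_univ, Fintype.card_fin]
  rw [cond_apply hA, hden, hnum, coeff_pow_poissonSeries_sub_C_mul_X,
    ENNReal.ofReal_div_of_pos (pow_pos (sub_pos.2 (mul_exp_neg_lt_one lam)) L),
    ENNReal.div_eq_inv_mul]

/-- Lemma 2 of the paper (generic form): for iid Poisson(λ) variables `N₁, …, N_L`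
and an integer `n ≥ 0` with `n ≠ 1` or `L ≥ 2`, the conditional probability that
`∑ Nᵢ = n` given that no `Nᵢ` equals 1 is
`[(Lλ)^n e^{−Lλ}/n! + Σ_{c=1}^{min(L,n)} (−1)^c C(L,c) (λe^{−λ})^c ((L−c)λ)^{n−c}
   e^{−(L−c)λ}/(n−c)!] / (1 − λe^{−λ})^L`. -/
theorem stmt8 {Ω : Type*} [MeasurableSpace Ω] (μ : Measure Ω) [IsProbabilityMeasure μ]
    (L : ℕ) (lam : ℝ) (hlam : 0 < lam)
    (N : Fin L → Ω → ℕ) (hmeas : ∀ i, Measurable (N i))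
    (hindep : iIndepFun N μ)
    (hpois : ∀ (i : Fin L) (k : ℕ),
      μ {ω | N i ω = k} = ENNReal.ofReal (Real.exp (-lam) * lam ^ k / (Nat.factorial k)))
    (n : ℕ) (hn : n ≠ 1 ∨ 2 ≤ L) :
    (μ[|{ω | ∀ i : Fin L, N i ω ≠ 1}]) {ω | (∑ i, N i ω) = n}
      = ENNReal.ofReal
          ((((L : ℝ) * lam) ^ n * Real.exp (-((L : ℝ) * lam)) / (Nat.factorial n)
            + ∑ c ∈ Finset.Icc 1 (min L n),
                (-1 : ℝ) ^ c * (Nat.choose L c) * (lam * Real.exp (-lam)) ^ c *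
                  (((L : ℝ) - c) * lam) ^ (n - c) *
                    Real.exp (-(((L : ℝ) - c) * lam)) / (Nat.factorial (n - c)))
            / (1 - lam * Real.exp (-lam)) ^ L) :=
  stmt8_general μ L lam hlam N hmeas hindep hpois n
end

section
/- Let I be a nonnegative real random variable on a probability space, and let A ≥ 0 and B > 0 be reals. Then E[ln(1 + A/(B + I))] = ∫₀^∞ (e^{−s·B}/s) · E[e^{−s·I}] · (1 − e^{−s·A}) ds, where the integral is over s ∈ (0, ∞). -/
/-!
Writing `1/t = ∫₀^∞ e^{-st} ds` and integrating over `t ∈ (x, x + a]` gives, after swapping the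
two integrals, the Frullani-type representation
`log (1 + a/x) = ∫₀^∞ e^{-sx} (1 - e^{-sa}) / s ds`.
Taking `x = B + I`, the factor `e^{-sI}` splits off the integrand, which is dominated by the
integrable kernel `e^{-sB} (1 - e^{-sA}) / s`; Fubini then exchanges the expectation with the
`ds`-integral.
-/

open MeasureTheory Real Set

section Frullani

variable {x a : ℝ}

lemma integral_Ioc_exp_neg_mul {s : ℝ} (hs : s ≠ 0) (ha : 0 ≤ a) :
    ∫ t in Ioc x (x + a), exp (-(s * t)) = exp (-(s * x)) / s * (1 - exp (-(s * a))) := by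
  rw [← intervalIntegral.integral_of_le (by linarith)]
  have hderiv : ∀ t ∈ uIcc x (x + a),
      HasDerivAt (fun t => exp (-(s * t)) / -s) (exp (-(s * t))) t := by
    intro t _
    have hlin : HasDerivAt (fun t => -(s * t)) (-s) t := by
      simpa [mul_comm] using (hasDerivAt_mul_const (-s) : HasDerivAt (fun t => t * -s) _ t)
    exact (hlin.exp.div_const (-s)).congr_deriv (by field_simp)
  rw [intervalIntegral.integral_eq_sub_of_hasDerivAt hderiv
    ((by fun_prop : Continuous fun t => exp (-(s * t))).intervalIntegrable _ _), mul_add, neg_add,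
    exp_add]
  field_simp
  ring

lemma integral_Ioi_exp_neg_mul {t : ℝ} (ht : 0 < t) :
    ∫ s in Ioi (0 : ℝ), exp (-(s * t)) = t⁻¹ := by
  have hrw : (fun s => exp (-(s * t))) = fun s => exp (-t * s) := by
    ext s
    ring_nf
  rw [hrw, integral_exp_mul_Ioi (neg_neg_of_pos ht)]
  simp

lemma integrable_exp_neg_mul_prod (hx : 0 < x) (y : ℝ) :
    Integrable (fun z : ℝ × ℝ => exp (-(z.1 * z.2)))
      ((volume.restrict (Ioi 0)).prod (volume.restrict (Ioc x y))) := by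
  have hdom : Integrable (fun z : ℝ × ℝ => exp (-x * z.1) * 1)
      ((volume.restrict (Ioi 0)).prod (volume.restrict (Ioc x y))) :=
    (exp_neg_integrableOn_Ioi 0 hx).mul_prod (integrable_const 1)
  refine hdom.mono' (by fun_prop) ?_
  rw [Measure.prod_restrict]
  filter_upwards [ae_restrict_mem (measurableSet_Ioi.prod measurableSet_Ioc)] with z ⟨hs, ht⟩
  rw [norm_of_nonneg (exp_pos _).le, mul_one]
  exact exp_le_exp.2 (by nlinarith [hs.out, ht.1])

lemma integrableOn_exp_neg_mul_div_mul_one_sub_exp (hx : 0 < x) (ha : 0 ≤ a) :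
    IntegrableOn (fun s => exp (-(s * x)) / s * (1 - exp (-(s * a)))) (Ioi 0) := by
  refine (integrable_exp_neg_mul_prod hx (x + a)).integral_prod_left.congr ?_
  filter_upwards [ae_restrict_mem measurableSet_Ioi] with s hs
  exact integral_Ioc_exp_neg_mul (ne_of_gt hs) ha

theorem log_one_add_div_eq_integral (hx : 0 < x) (ha : 0 ≤ a) :
    log (1 + a / x) = ∫ s in Ioi 0, exp (-(s * x)) / s * (1 - exp (-(s * a))) :=
  calc log (1 + a / x) = ∫ t in Ioc x (x + a), t⁻¹ := by
        rw [← intervalIntegral.integral_of_le (by linarith),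
          integral_inv_of_pos hx (by linarith), add_div, div_self hx.ne', add_comm]
    _ = ∫ t in Ioc x (x + a), ∫ s in Ioi 0, exp (-(s * t)) :=
        setIntegral_congr_fun measurableSet_Ioc fun t ht =>
          (integral_Ioi_exp_neg_mul (hx.trans ht.1)).symm
    _ = ∫ s in Ioi 0, ∫ t in Ioc x (x + a), exp (-(s * t)) :=
        (integral_integral_swap (integrable_exp_neg_mul_prod hx _)).symm
    _ = _ := setIntegral_congr_fun measurableSet_Ioi fun s hs =>
        integral_Ioc_exp_neg_mul (ne_of_gt hs) ha

end Frullani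

lemma integrable_mul_exp_neg_mul_prod {Ω : Type*} [MeasurableSpace Ω] (μ : Measure Ω)
    [IsFiniteMeasure μ] {I : Ω → ℝ} (hI : Measurable I) (hInn : ∀ ω, 0 ≤ I ω) {k : ℝ → ℝ}
    (hk : IntegrableOn k (Ioi 0)) :
    Integrable (fun z : Ω × ℝ => k z.2 * exp (-(z.2 * I z.1)))
      (μ.prod (volume.restrict (Ioi 0))) := by
  refine (hk.comp_snd μ).mul_bdd (c := 1) (by fun_prop) ?_
  filter_upwards [Measure.quasiMeasurePreserving_snd.ae (ae_restrict_mem measurableSet_Ioi)]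
    with z hs
  rw [norm_of_nonneg (exp_pos _).le, exp_le_one_iff, neg_nonpos]
  exact mul_nonneg (le_of_lt hs) (hInn z.1)

/-- For a nonnegative real random variable `I` and reals `A ≥ 0`, `B > 0`:
`E[ln(1 + A/(B + I))] = ∫₀^∞ (e^{−sB}/s) E[e^{−sI}] (1 − e^{−sA}) ds`,
expressing the expected achievable rate through the Laplace transform of `I`. -/
theorem stmt13 {Ω : Type*} [MeasurableSpace Ω] (μ : Measure Ω) [IsProbabilityMeasure μ]
    (I : Ω → ℝ) (hI : Measurable I) (hInn : ∀ ω, 0 ≤ I ω)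
    (A B : ℝ) (hA : 0 ≤ A) (hB : 0 < B) :
    ∫ ω, Real.log (1 + A / (B + I ω)) ∂μ
      = ∫ s in Set.Ioi (0 : ℝ),
          (Real.exp (-(s * B)) / s) * (∫ ω, Real.exp (-(s * I ω)) ∂μ) *
            (1 - Real.exp (-(s * A))) := by
  set k : ℝ → ℝ := fun s => exp (-(s * B)) / s * (1 - exp (-(s * A)))
  have hlog : ∀ ω, log (1 + A / (B + I ω)) = ∫ s in Ioi 0, k s * exp (-(s * I ω)) := by
    intro ω
    rw [log_one_add_div_eq_integral (by linarith [hInn ω]) hA]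
    refine setIntegral_congr_fun measurableSet_Ioi fun s _ => ?_
    rw [mul_add, neg_add, exp_add]
    ring
  calc ∫ ω, log (1 + A / (B + I ω)) ∂μ
      = ∫ ω, (∫ s in Ioi 0, k s * exp (-(s * I ω))) ∂μ := integral_congr_ae (ae_of_all _ hlog)
    _ = ∫ s in Ioi 0, ∫ ω, k s * exp (-(s * I ω)) ∂μ :=
        integral_integral_swap (integrable_mul_exp_neg_mul_prod μ hI hInn
          (integrableOn_exp_neg_mul_div_mul_one_sub_exp hB hA))
    _ = _ := by
        congr with s
        rw [integral_const_mul]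
        ring
end
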